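/- Let Q1, Q2, d1, d2 be real numbers. Define the extrinsic softmax policy probability p_ext = exp(Q1) / (exp(Q1) + exp(Q2)) for action a1, and the total softmax policy probability p_tot = exp(Q1 + d1) / (exp(Q1 + d1) + exp(Q2 + d2)) for action a1. If 0 ≤ d2 − d1 and d2 − d1 ≤ 2·(Q1 − Q2), then the binary Shannon entropy satisfies H(p_ext) ≤ H(p_tot), where H(p) = −p·log p − (1−p)·log(1−p). -/

import Mathlib

/-!
Both policies are logistic functions of an action-value gap: `p_ext = σ(Q1 - Q2)` and
`p_tot = σ((Q1 - Q2) - (d2 - d1))`. The entropy `H ∘ σ` is even and decreasing in `|x|`, and the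
hypotheses say exactly that `|(Q1 - Q2) - (d2 - d1)| ≤ Q1 - Q2`.
-/

/-- Binary Shannon entropy `H(p) = -p log p - (1-p) log (1-p)`. -/
noncomputable def binEntropy (p : ℝ) : ℝ :=
  -p * Real.log p - (1 - p) * Real.log (1 - p)

section

open Real

theorem binEntropy_eq_real_binEntropy : _root_.binEntropy = Real.binEntropy := by
  funext p
  simp only [_root_.binEntropy, Real.binEntropy, log_inv]
  ring

theorem exp_div_exp_add_exp_eq_sigmoid (a b : ℝ) : exp a / (exp a + exp b) = sigmoid (a - b) := by
  rw [sigmoid_def, neg_sub, exp_sub]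
  field_simp

theorem binEntropy_sigmoid_neg (x : ℝ) :
    Real.binEntropy (sigmoid (-x)) = Real.binEntropy (sigmoid x) := by
  rw [sigmoid_neg, binEntropy_one_sub]

theorem binEntropy_sigmoid_abs (x : ℝ) :
    Real.binEntropy (sigmoid |x|) = Real.binEntropy (sigmoid x) := by
  rcases abs_choice x with hx | hx <;> rw [hx]
  exact binEntropy_sigmoid_neg x

theorem binEntropy_sigmoid_antitoneOn :
    AntitoneOn (fun x ↦ Real.binEntropy (sigmoid x)) (Set.Ici 0) :=
  fun _ hx _ hy hxy ↦ binEntropy_strictAntiOn.antitoneOn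
    ⟨sigmoid_zero ▸ sigmoid_le hx, sigmoid_le_one _⟩
    ⟨sigmoid_zero ▸ sigmoid_le hy, sigmoid_le_one _⟩ (sigmoid_le hxy)

theorem binEntropy_sigmoid_le_of_abs_le {x y : ℝ} (h : |y| ≤ |x|) :
    Real.binEntropy (sigmoid x) ≤ Real.binEntropy (sigmoid y) := by
  rw [← binEntropy_sigmoid_abs x, ← binEntropy_sigmoid_abs y]
  exact binEntropy_sigmoid_antitoneOn (abs_nonneg y) (abs_nonneg x) h

end

/-- Lemma 1 (two-action case): if `0 ≤ d2 - d1 ≤ 2 (Q1 - Q2)` then the entropy of the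
extrinsic softmax policy is at most that of the total softmax policy. -/
theorem entropy_ext_le_entropy_total (Q1 Q2 d1 d2 : ℝ)
    (h0 : 0 ≤ d2 - d1) (h1 : d2 - d1 ≤ 2 * (Q1 - Q2)) :
    binEntropy (Real.exp Q1 / (Real.exp Q1 + Real.exp Q2)) ≤
      binEntropy (Real.exp (Q1 + d1) / (Real.exp (Q1 + d1) + Real.exp (Q2 + d2))) := by
  rw [binEntropy_eq_real_binEntropy, exp_div_exp_add_exp_eq_sigmoid,
    exp_div_exp_add_exp_eq_sigmoid]
  apply binEntropy_sigmoid_le_of_abs_le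
  rw [abs_of_nonneg (by linarith : 0 ≤ Q1 - Q2), abs_le]
  constructor <;> linarith
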